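/- arXiv:2605.27975 — 2 statements merged into one kernel-verified Lean document; each statement's English description precedes it below -/
import Mathlib

section
/- For N ≥ 2, define β_c(N) = min_{m ∈ (0,1)} (1/m) log((1 + (N-1)m)/(1 - m)). Then β_c(N) ≥ log N + 1. -/
open Real Set

lemma key_ineq (N : ℕ) (hN : 2 ≤ N) {m : ℝ} (hm : m ∈ Set.Ioo (0:ℝ) 1) :
    Real.log N + 1 ≤ (1/m) * Real.log ((1 + (N - 1 : ℝ) * m) / (1 - m)) := by
  obtain ⟨hm0, hm1⟩ := hm
  have hN1 : (1:ℝ) ≤ (N:ℝ) := by exact_mod_cast Nat.one_le_of_lt hN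
  have hNm : (0:ℝ) < 1 + (N - 1 : ℝ) * m := by nlinarith
  have h1m : (0:ℝ) < 1 - m := by linarith
  -- Bernoulli: N^m = (1+(N-1))^m ≤ 1 + m(N-1)
  have hbern : (N:ℝ) ^ m ≤ 1 + (N - 1 : ℝ) * m := by
    have := rpow_one_add_le_one_add_mul_self (s := (N:ℝ) - 1) (by linarith)
      hm0.le hm1.le
    have h : (1 + ((N:ℝ) - 1)) = (N:ℝ) := by ring
    rw [h] at this
    linarith [this]
  have hlog1 : m * Real.log N ≤ Real.log (1 + (N - 1 : ℝ) * m) := by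
    have := Real.log_le_log (Real.rpow_pos_of_pos (by linarith) m) hbern
    rwa [Real.log_rpow (by linarith)] at this
  have hlog2 : Real.log (1 - m) ≤ -m := by
    have := Real.log_le_sub_one_of_pos h1m
    linarith
  have hsum : m * (Real.log N + 1) ≤ Real.log ((1 + (N - 1 : ℝ) * m) / (1 - m)) := by
    rw [Real.log_div hNm.ne' h1m.ne']
    nlinarith
  have : (1/m) * (m * (Real.log N + 1)) ≤
      (1/m) * Real.log ((1 + (N - 1 : ℝ) * m) / (1 - m)) := by
    apply mul_le_mul_of_nonneg_left hsum (by positivity)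
  calc Real.log N + 1 = (1/m) * (m * (Real.log N + 1)) := by field_simp
    _ ≤ _ := this

/-- Lower bound on the critical inverse temperature:
`β_c(N) = inf_{m ∈ (0,1)} (1/m) log((1+(N-1)m)/(1-m)) ≥ log N + 1`. -/
theorem critical_inverse_temperature_lower_bound
    (N : ℕ) (hN : 2 ≤ N) :
    Real.log N + 1 ≤
      sInf ((fun m : ℝ => (1/m) * Real.log ((1 + (N - 1 : ℝ) * m) / (1 - m))) ''
        Set.Ioo (0:ℝ) 1) := by
  apply le_csInf
  · exact (Set.nonempty_Ioo.mpr (by norm_num : (0:ℝ) < 1)).image _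
  · rintro b ⟨m, hm, rfl⟩
    exact key_ineq N hN hm
end

section
/- For N ≥ 2, the critical inverse temperature β_c(N) = min_{m ∈ (0,1)} (1/m) log((1 + (N-1)m)/(1 - m)) satisfies β_c(N) ≤ log N + log(1 + log N) + 1 + log(1 + log N)/log N for N ≥ 3. In particular β_c(N) = Θ(log N). -/
/-!
Since `β_c(N)` is an infimum, it is at most the value of `β(m) = (1/m) log((1 + (N-1)m)/(1-m))` at
any single `m ∈ (0,1)`. Bounding the numerator `1 + (N-1)m` by `N` gives
`β(m) ≤ (log N - log (1-m)) / m`, and the choice `m = L/(1+L)` with `L = log N` makes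
`1 - m = 1/(1+L)`, so that this bound equals `(1+L)(L + log(1+L))/L`, which is the claimed one.
-/

open Real Set

noncomputable def selfConsistentBeta (N m : ℝ) : ℝ :=
  (1 / m) * log ((1 + (N - 1) * m) / (1 - m))

lemma div_one_add_self_mem_Ioo {x : ℝ} (hx : 0 < x) : x / (1 + x) ∈ Ioo 0 1 :=
  ⟨by positivity, (div_lt_one (by positivity)).mpr (by linarith)⟩

section

variable {N m : ℝ}

lemma selfConsistentBeta_nonneg (hN : 1 ≤ N) (hm : m ∈ Ioo 0 1) :
    0 ≤ selfConsistentBeta N m := by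
  obtain ⟨hm0, hm1⟩ := hm
  have hnum : 1 - m ≤ 1 + (N - 1) * m := by nlinarith
  have hlog : 0 ≤ log ((1 + (N - 1) * m) / (1 - m)) :=
    log_nonneg ((one_le_div (by linarith)).mpr hnum)
  unfold selfConsistentBeta
  positivity

lemma bddBelow_image_selfConsistentBeta (hN : 1 ≤ N) :
    BddBelow (selfConsistentBeta N '' Ioo 0 1) := by
  refine ⟨0, ?_⟩
  rintro _ ⟨m, hm, rfl⟩
  exact selfConsistentBeta_nonneg hN hm

lemma selfConsistentBeta_le (hN : 1 ≤ N) (hm : m ∈ Ioo 0 1) :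
    selfConsistentBeta N m ≤ (log N - log (1 - m)) / m := by
  obtain ⟨hm0, hm1⟩ := hm
  have hnum_pos : 0 < 1 + (N - 1) * m := by nlinarith
  have hnum_le : 1 + (N - 1) * m ≤ N := by nlinarith
  have hlog : log ((1 + (N - 1) * m) / (1 - m)) ≤ log N - log (1 - m) := by
    rw [← log_div (by linarith) (by linarith)]
    exact log_le_log (div_pos hnum_pos (by linarith))
      (div_le_div_of_nonneg_right hnum_le (by linarith))
  rw [selfConsistentBeta, one_div_mul_eq_div]
  exact div_le_div_of_nonneg_right hlog hm0.le

lemma selfConsistentBeta_log_div_one_add_log_le (hN : 1 < N) :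
    selfConsistentBeta N (log N / (1 + log N))
      ≤ log N + log (1 + log N) + 1
          + log (1 + log N) / log N := by
  set L := log N
  have hL : 0 < L := log_pos hN
  have h_one_sub : 1 - L / (1 + L) = (1 + L)⁻¹ := by field_simp; ring
  calc selfConsistentBeta N (L / (1 + L))
      ≤ (L - log (1 - L / (1 + L))) / (L / (1 + L)) :=
        selfConsistentBeta_le hN.le (div_one_add_self_mem_Ioo hL)
    _ = L + log (1 + L) + 1 + log (1 + L) / L := by
      rw [h_one_sub, log_inv]
      field_simp
      ring

end

/-- Upper bound on the critical inverse temperature: for `N ≥ 3`,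
`β_c(N) ≤ log N + log(1 + log N) + 1 + log(1 + log N)/log N`. -/
theorem critical_inverse_temperature_upper_bound
    (N : ℕ) (hN : 3 ≤ N) :
    sInf ((fun m : ℝ => (1/m) * Real.log ((1 + (N - 1 : ℝ) * m) / (1 - m))) ''
        Set.Ioo (0:ℝ) 1)
      ≤ Real.log N + Real.log (1 + Real.log N) + 1
          + Real.log (1 + Real.log N) / Real.log N := by
  have hN1 : (1 : ℝ) < N := by exact_mod_cast (by omega : 1 < N)
  have hm := div_one_add_self_mem_Ioo (Real.log_pos hN1)
  show sInf (selfConsistentBeta N '' Ioo 0 1) ≤ _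
  exact (csInf_le (bddBelow_image_selfConsistentBeta hN1.le) (mem_image_of_mem _ hm)).trans
    (selfConsistentBeta_log_div_one_add_log_le hN1)
end
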